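/- Let 0 < ν ≤ p < ∞ and n ≥ 2. For any g ∈ S₀(ℝⁿ), ‖g‖_{L^{p,ν}(ℝⁿ)} ≤ c ‖g‖_{𝓛^{p,ν}}, where ‖g‖_{𝓛^{p,ν}} = (∫_{ℝ₊²} (st)^{ν/p−1} (𝓡_{1,2} g(s,t))^ν ds dt)^{1/ν} is the norm defined via iterated rearrangements. Conversely, if 0 < p ≤ ν < ∞, then ‖g‖_{𝓛^{p,ν}} ≤ c' ‖g‖_{p,ν}. -/

import Mathlib

open MeasureTheory ENNReal Set
noncomputable section

/-- Nonincreasing rearrangement of an ℝ≥0∞-valued function. -/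
def rearr {α : Type*} [MeasurableSpace α] (μ : Measure α) (f : α → ℝ≥0∞) (t : ℝ) : ℝ≥0∞ :=
  sInf {y : ℝ≥0∞ | μ {x | y < f x} ≤ ENNReal.ofReal t}

/-- Lorentz L^{p,ν} functional: (∫₀^∞ (t^{1/p} f*(t))^ν dt/t)^{1/ν}. -/
def lorentz {α : Type*} [MeasurableSpace α] (μ : Measure α) (f : α → ℝ≥0∞)
    (p ν : ℝ) : ℝ≥0∞ :=
  (∫⁻ t in Set.Ioi (0:ℝ),
    (ENNReal.ofReal (t ^ (1/p)) * rearr μ f t) ^ ν / ENNReal.ofReal t) ^ (1/ν)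

/-- Δ₁(h)f(x,y) = f(x+h,y) − f(x,y). -/
def Delta1 {n : ℕ} (h : ℝ) (f : ℝ × (Fin n → ℝ) → ℝ) : ℝ × (Fin n → ℝ) → ℝ :=
  fun z => f (z.1 + h, z.2) - f z

/-- Iterated rearrangement 𝓡₁g(s,y): rearrangement in the first variable. -/
def rearr1 {n : ℕ} (g : ℝ × (Fin n → ℝ) → ℝ) (s : ℝ) (y : Fin n → ℝ) : ℝ≥0∞ :=
  rearr (volume : Measure ℝ) (fun x => (‖g (x, y)‖₊ : ℝ≥0∞)) s

/-- Iterated rearrangement 𝓡_{1,2}g(s,t). -/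
def rearr12 {n : ℕ} (g : ℝ × (Fin n → ℝ) → ℝ) (s t : ℝ) : ℝ≥0∞ :=
  rearr (volume : Measure (Fin n → ℝ)) (fun y => rearr1 g s y) t

/-- ‖g‖_{𝓛^{p,ν}} = (∫_{ℝ₊²} (st)^{ν/p−1} 𝓡_{1,2}g(s,t)^ν ds dt)^{1/ν}. -/
def calLpv {n : ℕ} (g : ℝ × (Fin n → ℝ) → ℝ) (p ν : ℝ) : ℝ≥0∞ :=
  (∫⁻ s in Set.Ioi (0:ℝ), ∫⁻ t in Set.Ioi (0:ℝ),
      ENNReal.ofReal ((s*t) ^ (ν/p - 1)) * rearr12 g s t ^ ν) ^ (1/ν)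

/-!
Write `r = ν / p`, `λ(l) = |{|g| > l}|`, `m₀(l, s) = |{y : |{x : |g(x, y)| > l}| > s}|` and
`m₁(l, s) = |{y : 𝓡₁g(s, y) > l}|`. The layer-cake formula, applied to the rearrangements, gives
`‖g‖_{p,ν}^ν = p ∫ l^(ν-1) λ(l)^r dl` and
`‖g‖_{𝓛^{p,ν}}^ν = p ∫ l^(ν-1) ∫ s^(r-1) m₁(l, s)^r ds dl`, while Fubini gives
`λ(l) = ∫ m₀(l, s) ds`. Since `m₁(l, s) ≤ m₀(l, s) ≤ m₁(l/2, s)` and both are nonincreasing in `s`,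
the two inequalities reduce to Hardy-type inequalities for a nonincreasing `m ≥ 0`:
`∫ s^(r-1) m^r ≤ (∫ m)^r` for `r ≥ 1`, and `(∫ m)^r ≤ C_r ∫ s^(r-1) m^r` for `r ≤ 1`;
in the second case the passage from `l` to `l/2` costs the factor `2^ν`.
-/

open Filter Topology

section Rearrangement

variable {α : Type*} [MeasurableSpace α] (μ : Measure α) (f : α → ℝ≥0∞)

theorem le_rearr_of_lt_measure {t : ℝ} {c : ℝ≥0∞} (h : ENNReal.ofReal t < μ {x | c < f x}) :
    c ≤ rearr μ f t :=
  le_sInf fun _ hy => le_of_not_gt fun hyc =>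
    (h.trans_le ((measure_mono fun _ hx => hyc.trans hx).trans hy)).false

theorem lt_measure_of_lt_rearr {t : ℝ} {c : ℝ≥0∞} (h : c < rearr μ f t) :
    ENNReal.ofReal t < μ {x | c < f x} :=
  lt_of_not_ge fun hle =>
    (sInf_le (show c ∈ {y : ℝ≥0∞ | μ {x | y < f x} ≤ ENNReal.ofReal t} from hle)).not_gt h

theorem rearr_antitone : Antitone (rearr μ f) := fun _ _ h =>
  sInf_le_sInf fun _ hy => hy.trans (ENNReal.ofReal_le_ofReal h)

/-- The converse of `lt_measure_of_lt_rearr` rests on the right-continuity of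
`c ↦ μ {x | c < f x}`. -/
theorem lt_rearr_iff {t : ℝ} {c : ℝ≥0∞} (hc : c ≠ ∞) :
    c < rearr μ f t ↔ ENNReal.ofReal t < μ {x | c < f x} := by
  refine ⟨lt_measure_of_lt_rearr μ f, fun h => ?_⟩
  obtain ⟨u, hu_anti, hu_mem, hu_lim⟩ := exists_seq_strictAnti_tendsto' hc.lt_top
  have hunion : {x | c < f x} = ⋃ k, {x | u k < f x} := by
    ext x
    simp only [mem_ofPred_eq, mem_iUnion]
    exact ⟨fun hx => (hu_lim.eventually (gt_mem_nhds hx)).exists,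
      fun ⟨k, hk⟩ => (hu_mem k).1.trans hk⟩
  have hmono : Monotone fun k => {x | u k < f x} := fun _ _ hij _ hx =>
    (hu_anti.antitone hij).trans_lt hx
  rw [hunion, hmono.measure_iUnion, lt_iSup_iff] at h
  obtain ⟨k, hk⟩ := h
  exact (hu_mem k).1.trans_le (le_rearr_of_lt_measure μ f hk)

theorem measurable_rearr_uncurry {β : Type*} [MeasurableSpace β] {F : β → α → ℝ≥0∞}
    (hF : ∀ c, Measurable fun y => μ {x | c < F y x}) :
    Measurable fun q : ℝ × β => rearr μ (F q.2) q.1 := by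
  refine measurable_of_Ioi fun c => ?_
  rcases eq_or_ne c ∞ with rfl | hc
  · simp
  have hpre : (fun q : ℝ × β => rearr μ (F q.2) q.1) ⁻¹' Ioi c =
      {q | ENNReal.ofReal q.1 < μ {x | c < F q.2 x}} := by
    ext q
    exact lt_rearr_iff μ (F q.2) hc
  rw [hpre]
  exact measurableSet_lt (measurable_ofReal.comp measurable_fst) ((hF c).comp measurable_snd)

end Rearrangement

section PowerIntegrals

theorem lintegral_Ioc_ofReal_rpow {e : ℝ} (he : -1 < e) {a b : ℝ} (ha : 0 ≤ a) (hab : a ≤ b) :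
    ∫⁻ t in Ioc a b, ENNReal.ofReal (t ^ e) =
      ENNReal.ofReal ((b ^ (e + 1) - a ^ (e + 1)) / (e + 1)) := by
  have hint : IntegrableOn (fun t => t ^ e) (Ioc a b) :=
    (intervalIntegrable_iff_integrableOn_Ioc_of_le hab).1
      (intervalIntegral.intervalIntegrable_rpow' he)
  have hnonneg : 0 ≤ᵐ[volume.restrict (Ioc a b)] fun t => t ^ e :=
    (ae_restrict_iff' measurableSet_Ioc).2
      (Eventually.of_forall fun t ht => Real.rpow_nonneg (ha.trans ht.1.le) e)
  rw [← ofReal_integral_eq_lintegral_ofReal hint hnonneg, ← intervalIntegral.integral_of_le hab,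
    integral_rpow (Or.inl he)]

theorem lintegral_Ioi_ofReal_rpow (e : ℝ) : ∫⁻ t in Ioi (0 : ℝ), ENNReal.ofReal (t ^ e) = ∞ := by
  by_contra h
  have hnonneg : 0 ≤ᵐ[volume.restrict (Ioi (0 : ℝ))] fun t => t ^ e :=
    (ae_restrict_iff' measurableSet_Ioi).2
      (Eventually.of_forall fun t ht => Real.rpow_nonneg ht.le e)
  exact not_integrableOn_Ioi_rpow e
    ⟨(measurable_id.pow_const e).aestronglyMeasurable,
      (hasFiniteIntegral_iff_ofReal hnonneg).2 (lt_top_iff_ne_top.2 h)⟩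

theorem setLIntegral_Ioi_inter_ofReal_lt_rpow_sub_one {r : ℝ} (hr : 0 < r) (b : ℝ≥0∞) :
    ∫⁻ t in Ioi 0 ∩ {t | ENNReal.ofReal t < b}, ENNReal.ofReal (t ^ (r - 1)) =
      b ^ r / ENNReal.ofReal r := by
  rcases eq_or_ne b ∞ with rfl | hb
  · simp only [ofReal_lt_top, ofPred_true, inter_univ]
    rw [lintegral_Ioi_ofReal_rpow, top_rpow_of_pos hr, top_div_of_ne_top ofReal_ne_top]
  have hset : Ioi 0 ∩ {t | ENNReal.ofReal t < b} = Ioo 0 b.toReal := by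
    ext t
    simp only [mem_inter_iff, mem_Ioi, mem_ofPred_eq, mem_Ioo, and_congr_right_iff]
    exact fun ht => ofReal_lt_iff_lt_toReal ht.le hb
  rw [hset, setLIntegral_congr Ioo_ae_eq_Ioc,
    lintegral_Ioc_ofReal_rpow (by linarith) le_rfl toReal_nonneg, sub_add_cancel,
    Real.zero_rpow hr.ne', sub_zero, ofReal_div_of_pos hr,
    ← ofReal_rpow_of_nonneg toReal_nonneg hr.le, ofReal_toReal hb]

theorem setLIntegral_Ioi_comp_mul_left {a : ℝ} (ha : 0 < a) (f : ℝ → ℝ≥0∞) :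
    ∫⁻ x in Ioi 0, f (a * x) = ENNReal.ofReal a⁻¹ * ∫⁻ x in Ioi 0, f x := by
  let e := MeasurableEquiv.mulLeft₀ a ha.ne'
  have he : (e : ℝ → ℝ) = (a * ·) := rfl
  have hpre : e ⁻¹' Ioi 0 = Ioi 0 := by rw [he, preimage_const_mul_Ioi₀ _ ha, zero_div]
  calc ∫⁻ x in Ioi 0, f (a * x) = ∫⁻ y, f y ∂(Measure.map e volume).restrict (Ioi 0) := by
        rw [e.restrict_map, lintegral_map_equiv, hpre]; rfl
    _ = ENNReal.ofReal a⁻¹ * ∫⁻ x in Ioi 0, f x := by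
        rw [he, Real.map_volume_mul_left ha.ne', Measure.restrict_smul, lintegral_smul_measure,
          abs_of_pos (inv_pos.2 ha), smul_eq_mul]

theorem setLIntegral_comp_div_mul_rpow {a : ℝ} (ha : 0 < a) (f : ℝ → ℝ≥0∞) (ν : ℝ) :
    ∫⁻ l in Ioi 0, f (l / a) * ENNReal.ofReal (l ^ (ν - 1)) =
      ENNReal.ofReal (a ^ ν) * ∫⁻ l in Ioi 0, f l * ENNReal.ofReal (l ^ (ν - 1)) := by
  set I := ∫⁻ l in Ioi 0, f l * ENNReal.ofReal (l ^ (ν - 1))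
  have hscaled : ∫⁻ x in Ioi 0, f (a * x / a) * ENNReal.ofReal ((a * x) ^ (ν - 1)) =
      ENNReal.ofReal (a ^ (ν - 1)) * I := by
    rw [← lintegral_const_mul' _ _ ofReal_ne_top]
    refine setLIntegral_congr_fun measurableSet_Ioi fun x hx => ?_
    rw [mul_div_cancel_left₀ _ ha.ne', Real.mul_rpow ha.le hx.le,
      ofReal_mul (Real.rpow_nonneg ha.le _), mul_left_comm]
  calc ∫⁻ l in Ioi 0, f (l / a) * ENNReal.ofReal (l ^ (ν - 1))
      = ENNReal.ofReal a * (ENNReal.ofReal a⁻¹ *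
          ∫⁻ l in Ioi 0, f (l / a) * ENNReal.ofReal (l ^ (ν - 1))) := by
        rw [← mul_assoc, ← ofReal_mul ha.le, mul_inv_cancel₀ ha.ne', ofReal_one, one_mul]
    _ = ENNReal.ofReal a * (ENNReal.ofReal (a ^ (ν - 1)) * I) := by
        rw [← setLIntegral_Ioi_comp_mul_left ha, hscaled]
    _ = ENNReal.ofReal (a ^ ν) * I := by
        rw [← mul_assoc, ← ofReal_mul ha.le, Real.rpow_sub_one ha.ne', mul_div_cancel₀ _ ha.ne']

end PowerIntegrals

section LayerCake

variable {β : Type*} [MeasurableSpace β] (μ : Measure β) [SFinite μ]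

theorem lintegral_rpow_eq_lintegral_meas_ofReal_lt_mul {F : β → ℝ≥0∞} (hF : Measurable F) {ν : ℝ}
    (hν : 0 < ν) :
    ∫⁻ x, F x ^ ν ∂μ =
      ENNReal.ofReal ν *
        ∫⁻ t in Ioi 0, μ {x | ENNReal.ofReal t < F x} * ENNReal.ofReal (t ^ (ν - 1)) := by
  set w : ℝ → ℝ≥0∞ := fun t => ENNReal.ofReal (t ^ (ν - 1))
  have hpow : ∀ x,
      F x ^ ν = ENNReal.ofReal ν * ∫⁻ t in Ioi 0, {t | ENNReal.ofReal t < F x}.indicator w t := by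
    intro x
    have hs : MeasurableSet {t : ℝ | ENNReal.ofReal t < F x} :=
      measurableSet_lt measurable_ofReal measurable_const
    rw [lintegral_indicator hs, Measure.restrict_restrict hs, inter_comm,
      setLIntegral_Ioi_inter_ofReal_lt_rpow_sub_one hν,
      ENNReal.mul_div_cancel (ofReal_pos.2 hν).ne' ofReal_ne_top]
  rw [lintegral_congr hpow, lintegral_const_mul' _ _ ofReal_ne_top, lintegral_lintegral_swap]
  · refine congrArg _ (lintegral_congr fun t => ?_)
    have hsection : (fun x => {t | ENNReal.ofReal t < F x}.indicator w t) =
        {x | ENNReal.ofReal t < F x}.indicator fun _ => w t := by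
      ext x
      by_cases h : ENNReal.ofReal t < F x <;> simp [h]
    have hs : MeasurableSet {x | ENNReal.ofReal t < F x} := hF measurableSet_Ioi
    rw [hsection, lintegral_indicator_const hs, mul_comm]
  · have hE : MeasurableSet {q : β × ℝ | ENNReal.ofReal q.2 < F q.1} :=
      measurableSet_lt (measurable_ofReal.comp measurable_snd) (hF.comp measurable_fst)
    refine (Measurable.indicator (f := fun q : β × ℝ => w q.2) ?_ hE).aemeasurable.congr ?_
    · exact (measurable_snd.pow_const _).ennreal_ofReal
    · exact Eventually.of_forall fun q => by
        by_cases h : ENNReal.ofReal q.2 < F q.1 <;> simp [h, Function.uncurry]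

theorem lintegral_eq_lintegral_meas_ofReal_lt {F : β → ℝ≥0∞} (hF : Measurable F) :
    ∫⁻ x, F x ∂μ = ∫⁻ t in Ioi 0, μ {x | ENNReal.ofReal t < F x} := by
  simpa using lintegral_rpow_eq_lintegral_meas_ofReal_lt_mul μ hF one_pos

end LayerCake

theorem setLIntegral_rpow_mul_rearr_rpow {α : Type*} [MeasurableSpace α] (μ : Measure α)
    (f : α → ℝ≥0∞) {r ν : ℝ} (hr : 0 < r) (hν : 0 < ν) :
    ∫⁻ t in Ioi 0, ENNReal.ofReal (t ^ (r - 1)) * rearr μ f t ^ ν =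
      ENNReal.ofReal (ν / r) *
        ∫⁻ l in Ioi 0, μ {x | ENNReal.ofReal l < f x} ^ r * ENNReal.ofReal (l ^ (ν - 1)) := by
  have hw : Measurable fun t : ℝ => ENNReal.ofReal (t ^ (r - 1)) :=
    (measurable_id.pow_const _).ennreal_ofReal
  have hR : Measurable (rearr μ f) := (rearr_antitone μ f).measurable
  set ρ := (volume.restrict (Ioi (0 : ℝ))).withDensity fun t => ENNReal.ofReal (t ^ (r - 1))
  have hρ : ∀ l : ℝ, ρ {t | ENNReal.ofReal l < rearr μ f t} =
      μ {x | ENNReal.ofReal l < f x} ^ r / ENNReal.ofReal r := by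
    intro l
    have hs : MeasurableSet {t | ENNReal.ofReal l < rearr μ f t} := hR measurableSet_Ioi
    rw [withDensity_apply _ hs, Measure.restrict_restrict hs]
    simp_rw [lt_rearr_iff μ f ofReal_ne_top]
    rw [inter_comm, setLIntegral_Ioi_inter_ofReal_lt_rpow_sub_one hr]
  calc ∫⁻ t in Ioi 0, ENNReal.ofReal (t ^ (r - 1)) * rearr μ f t ^ ν
      = ∫⁻ t, rearr μ f t ^ ν ∂ρ :=
        (lintegral_withDensity_eq_lintegral_mul _ hw (hR.pow_const ν)).symm
    _ = ENNReal.ofReal ν * ∫⁻ l in Ioi 0, μ {x | ENNReal.ofReal l < f x} ^ r / ENNReal.ofReal r *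
          ENNReal.ofReal (l ^ (ν - 1)) := by
        simp_rw [lintegral_rpow_eq_lintegral_meas_ofReal_lt_mul ρ hR hν, hρ]
    _ = _ := by
        simp_rw [div_eq_mul_inv, mul_right_comm _ (ENNReal.ofReal r)⁻¹]
        rw [lintegral_mul_const' _ _ (ENNReal.inv_ne_top.2 (ofReal_pos.2 hr).ne'),
          ENNReal.ofReal_mul hν.le, ENNReal.ofReal_inv_of_pos hr]
        ring

theorem lorentz_eq_setLIntegral_distribution {α : Type*} [MeasurableSpace α] (μ : Measure α)
    (f : α → ℝ≥0∞) {p ν : ℝ} (hp : 0 < p) (hν : 0 < ν) :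
    lorentz μ f p ν = (ENNReal.ofReal p * ∫⁻ l in Ioi 0,
      μ {x | ENNReal.ofReal l < f x} ^ (ν / p) * ENNReal.ofReal (l ^ (ν - 1))) ^ (1 / ν) := by
  have hintegrand : ∀ t ∈ Ioi (0 : ℝ),
      (ENNReal.ofReal (t ^ (1 / p)) * rearr μ f t) ^ ν / ENNReal.ofReal t =
        ENNReal.ofReal (t ^ (ν / p - 1)) * rearr μ f t ^ ν := by
    intro t ht
    rw [mul_rpow_of_nonneg _ _ hν.le, ofReal_rpow_of_pos (Real.rpow_pos_of_pos ht _),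
      ← Real.rpow_mul ht.le, div_eq_mul_inv, mul_right_comm, ← ofReal_inv_of_pos ht,
      ← ofReal_mul (Real.rpow_nonneg ht.le _), ← Real.rpow_neg_one, ← Real.rpow_add ht,
      show 1 / p * ν + -1 = ν / p - 1 by ring]
  rw [lorentz, setLIntegral_congr_fun measurableSet_Ioi hintegrand,
    setLIntegral_rpow_mul_rearr_rpow μ f (div_pos hν hp) hν, div_div_cancel₀ hν.ne']

section HardyAntitone

variable {m : ℝ → ℝ≥0∞}

theorem ofReal_mul_le_setLIntegral_Ioi_of_antitone (hm : Antitone m) (s : ℝ) :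
    ENNReal.ofReal s * m s ≤ ∫⁻ u in Ioi 0, m u :=
  calc ENNReal.ofReal s * m s = ∫⁻ _ in Ioo 0 s, m s := by
        rw [setLIntegral_const, Real.volume_Ioo, sub_zero, mul_comm]
    _ ≤ ∫⁻ u in Ioo 0 s, m u := setLIntegral_mono' measurableSet_Ioo fun _ hu => hm hu.2.le
    _ ≤ ∫⁻ u in Ioi 0, m u := lintegral_mono_set fun _ hu => hu.1

theorem ENNReal.rpow_sub_one_mul_self {r : ℝ} (hr : 1 ≤ r) (x : ℝ≥0∞) :
    x ^ (r - 1) * x = x ^ r := by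
  conv_rhs => rw [← sub_add_cancel r 1, rpow_add_of_nonneg _ _ (by linarith) zero_le_one, rpow_one]

theorem setLIntegral_rpow_sub_one_mul_rpow_le_of_antitone {r : ℝ} (hr : 1 ≤ r) (hm : Antitone m) :
    ∫⁻ s in Ioi 0, ENNReal.ofReal (s ^ (r - 1)) * m s ^ r ≤ (∫⁻ s in Ioi 0, m s) ^ r := by
  set M := ∫⁻ s in Ioi 0, m s
  have hpoint : ∀ s ∈ Ioi (0 : ℝ), ENNReal.ofReal (s ^ (r - 1)) * m s ^ r ≤ M ^ (r - 1) * m s := by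
    intro s hs
    calc ENNReal.ofReal (s ^ (r - 1)) * m s ^ r = (ENNReal.ofReal s * m s) ^ (r - 1) * m s := by
          rw [mul_rpow_of_nonneg _ _ (by linarith), ← ofReal_rpow_of_pos hs, mul_assoc,
            ENNReal.rpow_sub_one_mul_self hr]
      _ ≤ M ^ (r - 1) * m s := by
          gcongr
          exact ofReal_mul_le_setLIntegral_Ioi_of_antitone hm s
  calc ∫⁻ s in Ioi 0, ENNReal.ofReal (s ^ (r - 1)) * m s ^ r ≤ ∫⁻ s in Ioi 0, M ^ (r - 1) * m s :=
        setLIntegral_mono' measurableSet_Ioi hpoint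
    _ = M ^ r := by rw [lintegral_const_mul _ hm.measurable, ENNReal.rpow_sub_one_mul_self hr]

theorem ENNReal.rpow_tsum_le_tsum_rpow {ι : Type*} (a : ι → ℝ≥0∞) {r : ℝ} (hr₀ : 0 < r)
    (hr₁ : r ≤ 1) :
    (∑' i, a i) ^ r ≤ ∑' i, a i ^ r := by
  classical
  have hfinset : ∀ S : Finset ι, (∑ i ∈ S, a i) ^ r ≤ ∑ i ∈ S, a i ^ r := by
    intro S
    induction S using Finset.induction_on with
    | empty => simp [zero_rpow_of_pos hr₀]
    | insert j T hj ih =>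
      rw [Finset.sum_insert hj, Finset.sum_insert hj]
      exact (rpow_add_le_add_rpow _ _ hr₀.le hr₁).trans (add_le_add_right ih _)
  have hlim : Tendsto (fun S : Finset ι => (∑ i ∈ S, a i) ^ r) atTop (𝓝 ((∑' i, a i) ^ r)) :=
    (ENNReal.continuous_rpow_const.tendsto _).comp ENNReal.summable.hasSum
  exact le_of_tendsto' hlim fun S => (hfinset S).trans (ENNReal.sum_le_tsum S)

theorem setLIntegral_Ioi_le_tsum_zpow_of_antitone (hm : Antitone m) :
    ∫⁻ s in Ioi 0, m s ≤ ∑' k : ℤ, ENNReal.ofReal (2 ^ k) * m (2 ^ k) := by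
  have hcover : Ioi (0 : ℝ) ⊆ ⋃ k : ℤ, Ioc (2 ^ k) (2 ^ (k + 1)) := fun t ht =>
    mem_iUnion.2 (exists_mem_Ioc_zpow ht one_lt_two)
  refine (lintegral_mono_set hcover).trans ((lintegral_iUnion_le _ _).trans
    (ENNReal.tsum_le_tsum fun k => ?_))
  calc ∫⁻ s in Ioc (2 ^ k) (2 ^ (k + 1)), m s
      ≤ ∫⁻ _ in Ioc ((2 : ℝ) ^ k) (2 ^ (k + 1)), m (2 ^ k) :=
        setLIntegral_mono' measurableSet_Ioc fun _ hu => hm hu.1.le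
    _ = ENNReal.ofReal (2 ^ k) * m (2 ^ k) := by
        rw [setLIntegral_const, Real.volume_Ioc, zpow_add_one₀ two_ne_zero, mul_comm]
        ring_nf

theorem ofReal_mul_rpow_le_setLIntegral_Ioc_zpow {r : ℝ} (hr : 0 < r) (hm : Antitone m) (k : ℤ) :
    ENNReal.ofReal ((1 - 2 ^ (-r)) / r) * (ENNReal.ofReal (2 ^ k) * m (2 ^ k)) ^ r ≤
      ∫⁻ s in Ioc (2 ^ (k - 1)) (2 ^ k), ENNReal.ofReal (s ^ (r - 1)) * m s ^ r := by
  have hpos : (0 : ℝ) < 2 ^ k := _root_.zpow_pos two_pos k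
  have hhalf : (2 : ℝ) ^ (k - 1) = 2 ^ k / 2 := zpow_sub_one₀ two_ne_zero k
  have hvalue : (((2 : ℝ) ^ k) ^ (r - 1 + 1) - ((2 : ℝ) ^ (k - 1)) ^ (r - 1 + 1)) / (r - 1 + 1) =
      ((2 : ℝ) ^ k) ^ r * ((1 - 2 ^ (-r)) / r) := by
    rw [sub_add_cancel, hhalf, Real.div_rpow hpos.le zero_le_two, Real.rpow_neg zero_le_two]
    ring
  calc ENNReal.ofReal ((1 - 2 ^ (-r)) / r) * (ENNReal.ofReal (2 ^ k) * m (2 ^ k)) ^ r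
      = (∫⁻ s in Ioc (2 ^ (k - 1)) (2 ^ k), ENNReal.ofReal (s ^ (r - 1))) * m (2 ^ k) ^ r := by
        rw [lintegral_Ioc_ofReal_rpow (by linarith) (_root_.zpow_pos two_pos _).le
          (zpow_le_zpow_right₀ one_le_two (by omega)), hvalue, ofReal_mul (by positivity),
          mul_rpow_of_nonneg _ _ hr.le, ofReal_rpow_of_pos hpos]
        ring
    _ = ∫⁻ s in Ioc (2 ^ (k - 1)) (2 ^ k), ENNReal.ofReal (s ^ (r - 1)) * m (2 ^ k) ^ r :=
        (lintegral_mul_const _ (measurable_id.pow_const _).ennreal_ofReal).symm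
    _ ≤ ∫⁻ s in Ioc (2 ^ (k - 1)) (2 ^ k), ENNReal.ofReal (s ^ (r - 1)) * m s ^ r :=
        setLIntegral_mono' measurableSet_Ioc fun _ hs => by gcongr; exact hm hs.2

theorem one_sub_two_rpow_neg_pos {r : ℝ} (hr : 0 < r) : 0 < 1 - (2 : ℝ) ^ (-r) := by
  linarith [Real.rpow_lt_one_of_one_lt_of_neg one_lt_two (neg_lt_zero.2 hr)]

/-- Dyadic blocks: `(∫ m)^r ≤ (∑ₖ 2ᵏ m(2ᵏ))^r ≤ ∑ₖ (2ᵏ m(2ᵏ))^r` by subadditivity of `x ↦ x^r`,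
and each term is controlled by the integral of `s^(r-1) m^r` over `(2ᵏ⁻¹, 2ᵏ]`. -/
theorem rpow_setLIntegral_Ioi_le_of_antitone {r : ℝ} (hr₀ : 0 < r) (hr₁ : r ≤ 1) (hm : Antitone m) :
    (∫⁻ s in Ioi 0, m s) ^ r ≤
      ENNReal.ofReal (r / (1 - 2 ^ (-r))) *
        ∫⁻ s in Ioi 0, ENNReal.ofReal (s ^ (r - 1)) * m s ^ r := by
  have hgap := one_sub_two_rpow_neg_pos hr₀
  set a : ℤ → ℝ≥0∞ := fun k => ENNReal.ofReal (2 ^ k) * m (2 ^ k)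
  have hdisj : Pairwise (Function.onFun Disjoint fun k : ℤ => Ioc ((2 : ℝ) ^ (k - 1)) (2 ^ k)) := by
    simpa using (zpow_right_mono₀ one_le_two).pairwise_disjoint_on_Ioc_pred
  have hlower : ENNReal.ofReal ((1 - 2 ^ (-r)) / r) * ∑' k, a k ^ r ≤
      ∫⁻ s in Ioi 0, ENNReal.ofReal (s ^ (r - 1)) * m s ^ r := by
    rw [← ENNReal.tsum_mul_left]
    refine (ENNReal.tsum_le_tsum (ofReal_mul_rpow_le_setLIntegral_Ioc_zpow hr₀ hm)).trans ?_
    rw [← lintegral_iUnion (fun _ => measurableSet_Ioc) hdisj]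
    exact lintegral_mono_set (iUnion_subset fun k _ ht => (_root_.zpow_pos two_pos _).trans ht.1)
  calc (∫⁻ s in Ioi 0, m s) ^ r ≤ (∑' k, a k) ^ r :=
        rpow_le_rpow (setLIntegral_Ioi_le_tsum_zpow_of_antitone hm) hr₀.le
    _ ≤ ∑' k, a k ^ r := ENNReal.rpow_tsum_le_tsum_rpow a hr₀ hr₁
    _ = ENNReal.ofReal (r / (1 - 2 ^ (-r))) *
          (ENNReal.ofReal ((1 - 2 ^ (-r)) / r) * ∑' k, a k ^ r) := by
        rw [← mul_assoc, ← ofReal_mul (by positivity), div_mul_div_cancel₀ hgap.ne',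
          div_self hr₀.ne', ofReal_one, one_mul]
    _ ≤ _ := by gcongr

end HardyAntitone

def sectionDistrib {n : ℕ} (g : ℝ × (Fin n → ℝ) → ℝ) (l s : ℝ) : ℝ≥0∞ :=
  volume {y | ENNReal.ofReal s < volume {x : ℝ | ENNReal.ofReal l < ‖g (x, y)‖₊}}

def rearr1Distrib {n : ℕ} (g : ℝ × (Fin n → ℝ) → ℝ) (l s : ℝ) : ℝ≥0∞ :=
  volume {y | ENNReal.ofReal l < rearr1 g s y}

section IteratedRearrangement

variable {n : ℕ} {g : ℝ × (Fin n → ℝ) → ℝ}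

theorem measurable_volume_section (hg : Measurable g) (c : ℝ≥0∞) :
    Measurable fun y : Fin n → ℝ => volume {x : ℝ | c < ‖g (x, y)‖₊} :=
  measurable_measure_prodMk_right (hg.nnnorm.coe_nnreal_ennreal measurableSet_Ioi)

theorem measurable_rearr1 (hg : Measurable g) :
    Measurable fun q : ℝ × (Fin n → ℝ) => rearr1 g q.1 q.2 :=
  measurable_rearr_uncurry volume (measurable_volume_section hg)

theorem measurable_rearr1Distrib (hg : Measurable g) :
    Measurable (Function.uncurry (rearr1Distrib g)) :=
  measurable_measure_prodMk_left (measurableSet_lt (measurable_ofReal.comp measurable_fst.fst)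
    ((measurable_rearr1 hg).comp (measurable_fst.snd.prodMk measurable_snd)))

theorem sectionDistrib_antitone (l : ℝ) : Antitone (sectionDistrib g l) := fun _ _ h =>
  measure_mono fun _ hy => (ENNReal.ofReal_le_ofReal h).trans_lt hy

theorem rearr1Distrib_antitone (l : ℝ) : Antitone (rearr1Distrib g l) := fun _ _ h =>
  measure_mono fun _ hy => hy.trans_le (rearr_antitone _ _ h)

theorem setLIntegral_sectionDistrib (hg : Measurable g) (l : ℝ) :
    ∫⁻ s in Ioi 0, sectionDistrib g l s = volume {z | ENNReal.ofReal l < ‖g z‖₊} := by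
  have hs : MeasurableSet {z : ℝ × (Fin n → ℝ) | ENNReal.ofReal l < ‖g z‖₊} :=
    hg.nnnorm.coe_nnreal_ennreal measurableSet_Ioi
  rw [Measure.volume_eq_prod, Measure.prod_apply_symm hs]
  exact (lintegral_eq_lintegral_meas_ofReal_lt _ (measurable_volume_section hg _)).symm

theorem rearr1Distrib_le_sectionDistrib (l s : ℝ) : rearr1Distrib g l s ≤ sectionDistrib g l s :=
  measure_mono fun _ => lt_measure_of_lt_rearr _ _

theorem sectionDistrib_le_rearr1Distrib_half {l : ℝ} (hl : 0 < l) (s : ℝ) :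
    sectionDistrib g l s ≤ rearr1Distrib g (l / 2) s :=
  measure_mono fun _ hy => ((ofReal_lt_ofReal_iff hl).2 (half_lt_self hl)).trans_le
    (le_rearr_of_lt_measure _ _ hy)

theorem calLpv_eq_setLIntegral_rearr1Distrib (hg : Measurable g) {p ν : ℝ} (hp : 0 < p)
    (hν : 0 < ν) :
    calLpv g p ν = (ENNReal.ofReal p * ∫⁻ l in Ioi 0,
      (∫⁻ s in Ioi 0, ENNReal.ofReal (s ^ (ν / p - 1)) * rearr1Distrib g l s ^ (ν / p)) *
        ENNReal.ofReal (l ^ (ν - 1))) ^ (1 / ν) := by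
  set w : ℝ → ℝ≥0∞ := fun l => ENNReal.ofReal (l ^ (ν - 1))
  have hinner : ∀ s ∈ Ioi (0 : ℝ),
      ∫⁻ t in Ioi 0, ENNReal.ofReal ((s * t) ^ (ν / p - 1)) * rearr12 g s t ^ ν =
        ENNReal.ofReal p * ∫⁻ l in Ioi 0,
          ENNReal.ofReal (s ^ (ν / p - 1)) * (rearr1Distrib g l s ^ (ν / p) * w l) := by
    intro s hs
    calc ∫⁻ t in Ioi 0, ENNReal.ofReal ((s * t) ^ (ν / p - 1)) * rearr12 g s t ^ ν
        = ENNReal.ofReal (s ^ (ν / p - 1)) *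
            ∫⁻ t in Ioi 0, ENNReal.ofReal (t ^ (ν / p - 1)) * rearr12 g s t ^ ν := by
          rw [← lintegral_const_mul' _ _ ofReal_ne_top]
          refine setLIntegral_congr_fun measurableSet_Ioi fun t ht => ?_
          rw [Real.mul_rpow hs.le ht.le, ofReal_mul (Real.rpow_nonneg hs.le _), mul_assoc]
      _ = _ := by
          unfold rearr12
          rw [setLIntegral_rpow_mul_rearr_rpow _ _ (div_pos hν hp) hν, div_div_cancel₀ hν.ne',
            mul_left_comm, lintegral_const_mul' _ _ ofReal_ne_top]
          rfl
  have hmeas : Measurable (Function.uncurry fun s l =>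
      ENNReal.ofReal (s ^ (ν / p - 1)) * (rearr1Distrib g l s ^ (ν / p) * w l)) :=
    (measurable_fst.pow_const _).ennreal_ofReal.mul
      ((((measurable_rearr1Distrib hg).comp measurable_swap).pow_const _).mul
        (measurable_snd.pow_const _).ennreal_ofReal)
  rw [calLpv, setLIntegral_congr_fun measurableSet_Ioi hinner,
    lintegral_const_mul' _ _ ofReal_ne_top, lintegral_lintegral_swap hmeas.aemeasurable]
  simp_rw [← mul_assoc]
  congr 2
  refine lintegral_congr fun l => lintegral_mul_const _ ?_
  exact (measurable_id.pow_const _).ennreal_ofReal.mul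
    ((measurable_rearr1Distrib hg).of_uncurry_left.pow_const _)

theorem setLIntegral_rearr1Distrib_le_rpow_volume (hg : Measurable g) {r : ℝ} (hr : 1 ≤ r)
    (l : ℝ) :
    ∫⁻ s in Ioi 0, ENNReal.ofReal (s ^ (r - 1)) * rearr1Distrib g l s ^ r ≤
      volume {z | ENNReal.ofReal l < ‖g z‖₊} ^ r :=
  calc ∫⁻ s in Ioi 0, ENNReal.ofReal (s ^ (r - 1)) * rearr1Distrib g l s ^ r
      ≤ (∫⁻ s in Ioi 0, rearr1Distrib g l s) ^ r :=
        setLIntegral_rpow_sub_one_mul_rpow_le_of_antitone hr (rearr1Distrib_antitone l)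
    _ ≤ (∫⁻ s in Ioi 0, sectionDistrib g l s) ^ r := by
        gcongr with s
        exact rearr1Distrib_le_sectionDistrib l s
    _ = volume {z | ENNReal.ofReal l < ‖g z‖₊} ^ r := by rw [setLIntegral_sectionDistrib hg]

theorem rpow_volume_le_setLIntegral_rearr1Distrib_half (hg : Measurable g) {r : ℝ} (hr₀ : 0 < r)
    (hr₁ : r ≤ 1) {l : ℝ} (hl : 0 < l) :
    volume {z | ENNReal.ofReal l < ‖g z‖₊} ^ r ≤ ENNReal.ofReal (r / (1 - 2 ^ (-r))) *
      ∫⁻ s in Ioi 0, ENNReal.ofReal (s ^ (r - 1)) * rearr1Distrib g (l / 2) s ^ r :=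
  calc volume {z | ENNReal.ofReal l < ‖g z‖₊} ^ r
      = (∫⁻ s in Ioi 0, sectionDistrib g l s) ^ r := by
        rw [setLIntegral_sectionDistrib hg]
    _ ≤ ENNReal.ofReal (r / (1 - 2 ^ (-r))) *
          ∫⁻ s in Ioi 0, ENNReal.ofReal (s ^ (r - 1)) * sectionDistrib g l s ^ r :=
        rpow_setLIntegral_Ioi_le_of_antitone hr₀ hr₁ (sectionDistrib_antitone l)
    _ ≤ _ := by
        gcongr with s
        exact sectionDistrib_le_rearr1Distrib_half hl s

theorem setLIntegral_rpow_volume_mul_le (hg : Measurable g) {r : ℝ} (hr₀ : 0 < r) (hr₁ : r ≤ 1)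
    (ν : ℝ) :
    ∫⁻ l in Ioi 0, volume {z | ENNReal.ofReal l < ‖g z‖₊} ^ r * ENNReal.ofReal (l ^ (ν - 1)) ≤
      ENNReal.ofReal (r / (1 - 2 ^ (-r)) * 2 ^ ν) * ∫⁻ l in Ioi 0,
        (∫⁻ s in Ioi 0, ENNReal.ofReal (s ^ (r - 1)) * rearr1Distrib g l s ^ r) *
          ENNReal.ofReal (l ^ (ν - 1)) := by
  set B : ℝ → ℝ≥0∞ := fun l =>
    ∫⁻ s in Ioi 0, ENNReal.ofReal (s ^ (r - 1)) * rearr1Distrib g l s ^ r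
  calc ∫⁻ l in Ioi 0, volume {z | ENNReal.ofReal l < ‖g z‖₊} ^ r * ENNReal.ofReal (l ^ (ν - 1))
      ≤ ∫⁻ l in Ioi 0,
          ENNReal.ofReal (r / (1 - 2 ^ (-r))) * (B (l / 2) * ENNReal.ofReal (l ^ (ν - 1))) :=
        setLIntegral_mono' measurableSet_Ioi fun l hl => by
          rw [← mul_assoc]
          gcongr
          exact rpow_volume_le_setLIntegral_rearr1Distrib_half hg hr₀ hr₁ hl
    _ = ENNReal.ofReal (r / (1 - 2 ^ (-r))) * (ENNReal.ofReal (2 ^ ν) *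
          ∫⁻ l in Ioi 0, B l * ENNReal.ofReal (l ^ (ν - 1))) := by
        rw [lintegral_const_mul' _ _ ofReal_ne_top, setLIntegral_comp_div_mul_rpow two_pos B ν]
    _ = _ := by
        rw [← mul_assoc, ← ofReal_mul (div_pos hr₀ (one_sub_two_rpow_neg_pos hr₀)).le]

end IteratedRearrangement

theorem lorentz_iterated_rearrangement_general (n : ℕ) (p ν : ℝ)
    (hp : 0 < p) (hν : 0 < ν) :
    (ν ≤ p → ∃ c > 0, ∀ g : ℝ × (Fin n → ℝ) → ℝ, Measurable g →
      (∀ y : ℝ, 0 < y → volume {x | y < |g x|} < ∞) →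
      lorentz volume (fun x => (‖g x‖₊ : ℝ≥0∞)) p ν ≤ ENNReal.ofReal c * calLpv g p ν) ∧
    (p ≤ ν → ∃ c > 0, ∀ g : ℝ × (Fin n → ℝ) → ℝ, Measurable g →
      (∀ y : ℝ, 0 < y → volume {x | y < |g x|} < ∞) →
      calLpv g p ν ≤ ENNReal.ofReal c * lorentz volume (fun x => (‖g x‖₊ : ℝ≥0∞)) p ν) := by
  have hr : 0 < ν / p := div_pos hν hp
  refine ⟨fun hνp => ?_, fun hpν => ?_⟩
  · have hK : 0 < ν / p / (1 - 2 ^ (-(ν / p))) * 2 ^ ν :=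
      mul_pos (div_pos hr (one_sub_two_rpow_neg_pos hr)) (Real.rpow_pos_of_pos two_pos ν)
    refine ⟨_, Real.rpow_pos_of_pos hK (1 / ν), fun g hg _ => ?_⟩
    rw [lorentz_eq_setLIntegral_distribution _ _ hp hν,
      calLpv_eq_setLIntegral_rearr1Distrib hg hp hν,
      ← ofReal_rpow_of_pos hK, ← mul_rpow_of_nonneg _ _ (by positivity), mul_left_comm]
    gcongr
    exact setLIntegral_rpow_volume_mul_le hg hr ((div_le_one hp).2 hνp) ν
  · refine ⟨1, one_pos, fun g hg _ => ?_⟩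
    rw [lorentz_eq_setLIntegral_distribution _ _ hp hν,
      calLpv_eq_setLIntegral_rearr1Distrib hg hp hν, ofReal_one, one_mul]
    gcongr with l
    exact setLIntegral_rearr1Distrib_le_rpow_volume hg ((one_le_div hp).2 hpν) l

/-- Yatsenko's inequalities (2.15)–(2.16): ‖g‖_{p,ν} ≤ c ‖g‖_{𝓛^{p,ν}} if 0 < ν ≤ p,
and ‖g‖_{𝓛^{p,ν}} ≤ c' ‖g‖_{p,ν} if 0 < p ≤ ν, for g ∈ S₀(ℝⁿ), n ≥ 2. -/
theorem lorentz_iterated_rearrangement (n : ℕ) (hn : 1 ≤ n) (p ν : ℝ)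
    (hp : 0 < p) (hν : 0 < ν) :
    (ν ≤ p → ∃ c > 0, ∀ g : ℝ × (Fin n → ℝ) → ℝ, Measurable g →
      (∀ y : ℝ, 0 < y → volume {x | y < |g x|} < ∞) →
      lorentz volume (fun x => (‖g x‖₊ : ℝ≥0∞)) p ν ≤ ENNReal.ofReal c * calLpv g p ν) ∧
    (p ≤ ν → ∃ c > 0, ∀ g : ℝ × (Fin n → ℝ) → ℝ, Measurable g →
      (∀ y : ℝ, 0 < y → volume {x | y < |g x|} < ∞) →
      calLpv g p ν ≤ ENNReal.ofReal c * lorentz volume (fun x => (‖g x‖₊ : ℝ≥0∞)) p ν) :=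
  lorentz_iterated_rearrangement_general n p ν hp hν
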